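/- arXiv:1206.1735 — 2 statements merged into one kernel-verified Lean document; each statement's English description precedes it below -/
import Mathlib

section
/- Let B ⊆ ℕ^m be a positive affine semigroup such that C(B) is generated by linearly independent elements e_1,…,e_d ∈ B, and let A be the submonoid of B generated by e_1,…,e_d. Assume that for every coset g of G(A) in G(B) there is an h_g ∈ G(B) such that either B ∩ g = h_g + A or B ∩ g = h_g + (A ∖ {0}). Let H := {h ∈ G(B) : B ∩ (h + G(A)) = h + (A ∖ {0})} and C := Hilb(B) ∖ {e_1,…,e_d}. Then (H + C) ∩ H = ∅ if and only if h + b ∈ B for all h ∈ H and all b ∈ Hilb(B). -/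
open scoped BigOperators

/-- The coordinatewise cast `ℕ^m → ℤ^m`. -/
def ntz {m : ℕ} (x : Fin m → ℕ) : Fin m → ℤ := fun i => (x i : ℤ)

/-- The coordinatewise cast `ℕ^m → ℚ^m`. -/
def ntq {m : ℕ} (x : Fin m → ℕ) : Fin m → ℚ := fun i => (x i : ℚ)

/-- `G(S)`: the subgroup of `ℤ^m` generated by an affine semigroup `S ⊆ ℕ^m`. -/
def grp {m : ℕ} (S : AddSubmonoid (Fin m → ℕ)) : AddSubgroup (Fin m → ℤ) :=
  AddSubgroup.closure (ntz '' (S : Set (Fin m → ℕ)))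

/-- `C(S)`: the cone in `ℚ^m` generated by `S`, i.e. all nonnegative rational
linear combinations of elements of `S`. -/
def cone {m : ℕ} (S : AddSubmonoid (Fin m → ℕ)) : Set (Fin m → ℚ) :=
  {x | ∃ (n : ℕ) (c : Fin n → ℚ) (v : Fin n → Fin m → ℕ),
    (∀ i, 0 ≤ c i) ∧ (∀ i, v i ∈ S) ∧ x = ∑ i, c i • ntq (v i)}

/-- `B_A := {x ∈ B : x ∉ B + (A \ {0})}`. -/
def BA {m : ℕ} (A B : AddSubmonoid (Fin m → ℕ)) : Set (Fin m → ℕ) :=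
  {x | x ∈ B ∧ ¬ ∃ b ∈ B, ∃ a ∈ A, a ≠ 0 ∧ x = b + a}

/-- `Hilb(S)`: the unique minimal generating set of a positive affine semigroup
`S ⊆ ℕ^m`, i.e. the set of nonzero elements of `S` that are not sums of two nonzero
elements of `S`. -/
def Hilb {m : ℕ} (S : AddSubmonoid (Fin m → ℕ)) : Set (Fin m → ℕ) :=
  {x | x ∈ S ∧ x ≠ 0 ∧ ¬ ∃ y ∈ S, ∃ z ∈ S, y ≠ 0 ∧ z ≠ 0 ∧ x = y + z}

/-!
The vectors `ntz (e k)` are `ℤ`-linearly independent, so `G(A) ≅ ℤ^d` with `A` corresponding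
to `ℕ^d`. For `h ∈ H` and `b ∈ Hilb(B)` we get `h + b + (A ∖ {0}) ⊆ B`, so the slice
`B ∩ (h + b + G(A))` contains `h + b + e_k` for all `k`. A translate `t + ℕ^d` or
`t + (ℕ^d ∖ {0})` containing every unit vector either contains `0` or equals `ℕ^d ∖ {0}`
(for `t + ℕ^d` the latter happens only when `d = 1` and `t = 1`). Hence `h + b ∈ B` or
`h + b ∈ H`; the second case contradicts `(H + C) ∩ H = ∅` when `b ∉ {e_k}`, while
`h + e_k ∈ B` by definition of `H`. Conversely, if `h + c ∈ H ∩ B` with `c ∈ C`, then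
`h + c ∈ (h + c) + (A ∖ {0})`, which is absurd.
-/

namespace Pi

variable {ι : Type*} [DecidableEq ι] {t : ι → ℤ}

theorem eq_single_of_forall_le_single (h : ∀ k, t ≤ Pi.single k 1) {i : ι} (hi : 0 < t i) :
    (∀ j, j = i) ∧ t = Pi.single i 1 := by
  have hunique : ∀ j, j = i := fun j => by
    by_contra hji
    have : t i ≤ Pi.single (M := fun _ => ℤ) j 1 i := h j i
    rw [Pi.single_eq_of_ne (Ne.symm hji)] at this
    omega
  refine ⟨hunique, funext fun j => ?_⟩
  obtain rfl := hunique j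
  have : t j ≤ Pi.single (M := fun _ => ℤ) j 1 j := h j j
  rw [Pi.single_eq_same] at this ⊢
  omega

theorem le_zero_or_forall_le_iff_pos_of_forall_le_single (h : ∀ k, t ≤ Pi.single k 1) :
    t ≤ 0 ∨ ∀ z, t ≤ z ↔ 0 < z := by
  by_cases ht : t ≤ 0
  · exact Or.inl ht
  obtain ⟨i, hi⟩ : ∃ i, 0 < t i := by simpa [Pi.le_def] using ht
  obtain ⟨hunique, rfl⟩ := eq_single_of_forall_le_single h hi
  refine Or.inr fun z => ?_
  have hall : ∀ p : ι → Prop, (∀ j, p j) ↔ p i :=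
    fun p => ⟨fun hp => hp i, fun hp j => hunique j ▸ hp⟩
  have hex : ∀ p : ι → Prop, (∃ j, p j) ↔ p i :=
    fun p => ⟨fun ⟨j, hp⟩ => hunique j ▸ hp, fun hp => ⟨i, hp⟩⟩
  simp only [Pi.le_def, Pi.lt_def, hall, hex, Pi.single_eq_same, Pi.zero_apply]
  omega

theorem le_zero_of_forall_lt_single (h : ∀ k, t < Pi.single k 1) : t ≤ 0 := by
  by_contra ht
  obtain ⟨i, hi⟩ : ∃ i, 0 < t i := by simpa [Pi.le_def] using ht
  obtain ⟨-, rfl⟩ := eq_single_of_forall_le_single (fun k => (h k).le) hi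
  exact lt_irrefl _ (h i)

end Pi

section LinearIndependent

variable {ι M : Type*} [Fintype ι] [AddCommGroup M] {v : ι → M}

local notation "L" => Fintype.linearCombination ℤ v

theorem exists_linearCombination_eq_of_mem_closure_range {x : M}
    (hx : x ∈ AddSubgroup.closure (Set.range v)) : ∃ t, L t = x := by
  obtain ⟨t, rfl⟩ := AddSubgroup.mem_closure_range_iff_of_fintype.mp hx
  exact ⟨t, rfl⟩

theorem linearCombination_mem_closure_range_iff (hv : LinearIndependent ℤ v) (z : ι → ℤ) :
    L z ∈ AddSubmonoid.closure (Set.range v) ↔ 0 ≤ z := by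
  rw [AddSubmonoid.mem_closure_range_iff_of_fintype]
  constructor
  · rintro ⟨n, hn⟩
    have : z = fun i => (n i : ℤ) := hv.fintypeLinearCombination_injective <| by
      simp [hn, Fintype.linearCombination_apply, natCast_zsmul]
    exact this ▸ fun i => Int.natCast_nonneg _
  · intro hz
    refine ⟨fun i => (z i).toNat, ?_⟩
    simp only [Fintype.linearCombination_apply, ← natCast_zsmul, Int.toNat_of_nonneg (hz _)]

theorem linearCombination_sub_mem_closure_range_iff (hv : LinearIndependent ℤ v) (z t : ι → ℤ) :
    L z - L t ∈ AddSubmonoid.closure (Set.range v) ↔ t ≤ z := by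
  rw [← map_sub, linearCombination_mem_closure_range_iff hv, sub_nonneg]

theorem neg_mem_or_forall_sub_mem_iff (hv : LinearIndependent ℤ v)
    {x : M} (hx : x ∈ AddSubgroup.closure (Set.range v))
    (h : ∀ k, v k - x ∈ AddSubmonoid.closure (Set.range v)) :
    -x ∈ AddSubmonoid.closure (Set.range v) ∨ ∀ y ∈ AddSubgroup.closure (Set.range v),
      y - x ∈ AddSubmonoid.closure (Set.range v) ↔
        y ∈ AddSubmonoid.closure (Set.range v) ∧ y ≠ 0 := by
  classical
  obtain ⟨t, rfl⟩ := exists_linearCombination_eq_of_mem_closure_range hx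
  have hvk : ∀ k, v k = L (Pi.single k 1) := by simp
  simp only [hvk, linearCombination_sub_mem_closure_range_iff hv] at h
  rcases Pi.le_zero_or_forall_le_iff_pos_of_forall_le_single h with ht | ht
  · left
    rwa [← map_neg, linearCombination_mem_closure_range_iff hv, neg_nonneg]
  · right
    intro y hy
    obtain ⟨z, rfl⟩ := exists_linearCombination_eq_of_mem_closure_range hy
    rw [linearCombination_sub_mem_closure_range_iff hv,
      linearCombination_mem_closure_range_iff hv, ht, lt_iff_le_and_ne, ne_comm, Ne, Ne, map_eq_zero_iff _ hv.fintypeLinearCombination_injective]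

theorem neg_mem_of_forall_sub_mem_ne (hv : LinearIndependent ℤ v)
    {x : M} (hx : x ∈ AddSubgroup.closure (Set.range v))
    (h : ∀ k, v k - x ∈ AddSubmonoid.closure (Set.range v) ∧ v k ≠ x) :
    -x ∈ AddSubmonoid.closure (Set.range v) := by
  classical
  obtain ⟨t, rfl⟩ := exists_linearCombination_eq_of_mem_closure_range hx
  have hvk : ∀ k, v k = L (Pi.single k 1) := by simp
  simp only [hvk, linearCombination_sub_mem_closure_range_iff hv,
    hv.fintypeLinearCombination_injective.ne_iff] at h
  rw [← map_neg, linearCombination_mem_closure_range_iff hv, neg_nonneg]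
  exact Pi.le_zero_of_forall_lt_single fun k => lt_of_le_of_ne' (h k).1 (h k).2

end LinearIndependent

section Translate

variable {ι M : Type*} [Fintype ι] [AddCommGroup M] {v : ι → M}

local notation "P" => AddSubmonoid.closure (Set.range v)

theorem mem_or_eq_pos_translate (hv : LinearIndependent ℤ v) {F : Set M} {g x : M}
    (hF_sub : ∀ y ∈ F, y - g ∈ AddSubgroup.closure (Set.range v))
    (hF_add : ∀ k, g + v k ∈ F)
    (hF : F = {y | y - x ∈ P} ∨ F = {y | y - x ∈ P ∧ y ≠ x}) :
    g ∈ F ∨ F = {y | y - g ∈ P ∧ y ≠ g} := by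
  have hPG : ∀ {y}, y ∈ P → y ∈ AddSubgroup.closure (Set.range v) :=
    fun hy => AddSubgroup.le_closure_toAddSubmonoid _ hy
  have hvG : ∀ k, v k ∈ AddSubgroup.closure (Set.range v) :=
    fun k => AddSubgroup.subset_closure (Set.mem_range_self k)
  have hsub : ∀ k, g + v k - x = v k - (x - g) := fun k => by abel
  rcases hF with rfl | rfl
  · have hx : x - g ∈ AddSubgroup.closure (Set.range v) := hF_sub x (by simp)
    rcases neg_mem_or_forall_sub_mem_iff hv hx fun k => hsub k ▸ hF_add k with hneg | hpos
    · left
      simpa using hneg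
    · right
      ext y
      have hy : y - x = y - g - (x - g) := by abel
      simp only [Set.mem_ofPred_eq, hy, ← sub_ne_zero (a := y)]
      exact ⟨fun h => (hpos _ (by simpa using add_mem (hPG h) hx)).mp h,
        fun h => (hpos _ (hPG h.1)).mpr h⟩
  · rcases isEmpty_or_nonempty ι with hι | ⟨⟨k⟩⟩
    · -- without generators `P = 0`, so both sets are empty
      right
      ext y
      simp [Set.range_eq_empty, sub_eq_zero]
    · have hx : x - g ∈ AddSubgroup.closure (Set.range v) := by
        have := sub_mem (hvG k) (hPG (hF_add k).1)
        rwa [hsub, sub_sub_cancel] at this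
      have hneg := neg_mem_of_forall_sub_mem_ne hv hx fun k =>
        ⟨hsub k ▸ (hF_add k).1, fun h => (hF_add k).2 (by rw [h]; abel)⟩
      rw [neg_sub] at hneg
      by_cases hgx : g = x
      · exact Or.inr (hgx ▸ rfl)
      · exact Or.inl ⟨hneg, hgx⟩

end Translate

section Cast

variable {m : ℕ}

theorem ntz_eq_compLeft :
    (ntz : (Fin m → ℕ) → Fin m → ℤ) = (Nat.castAddMonoidHom ℤ).compLeft (Fin m) :=
  rfl

theorem ntz_add (x y : Fin m → ℕ) : ntz (x + y) = ntz x + ntz y :=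
  funext fun i => Nat.cast_add (x i) (y i)

theorem ntz_injective : Function.Injective (ntz : (Fin m → ℕ) → Fin m → ℤ) :=
  fun _ _ h => funext fun i => Int.ofNat_inj.mp (congrFun h i)

theorem ntz_eq_zero_iff {x : Fin m → ℕ} : ntz x = 0 ↔ x = 0 :=
  ntz_injective.eq_iff' (funext fun _ => Nat.cast_zero)

theorem ntz_image_closure (s : Set (Fin m → ℕ)) :
    ntz '' (AddSubmonoid.closure s : Set (Fin m → ℕ)) = AddSubmonoid.closure (ntz '' s) := by
  rw [ntz_eq_compLeft, ← AddSubmonoid.coe_map, AddMonoidHom.map_mclosure]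

theorem grp_closure (s : Set (Fin m → ℕ)) :
    grp (AddSubmonoid.closure s) = AddSubgroup.closure (ntz '' s) := by
  rw [grp, ntz_image_closure]
  exact le_antisymm (AddSubgroup.closure_le _ |>.mpr (AddSubgroup.le_closure_toAddSubmonoid _))
    (AddSubgroup.closure_mono AddSubmonoid.subset_closure)

theorem setOf_eq_add_ntz (s : Set (Fin m → ℕ)) (x : Fin m → ℤ) :
    {y | ∃ a ∈ AddSubmonoid.closure s, y = x + ntz a} =
      {y | y - x ∈ AddSubmonoid.closure (ntz '' s)} := by
  ext y
  simp only [Set.mem_ofPred_eq, ← SetLike.mem_coe, ← ntz_image_closure, Set.mem_image,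
    eq_sub_iff_add_eq', eq_comm]

theorem setOf_ne_zero_eq_add_ntz (s : Set (Fin m → ℕ)) (x : Fin m → ℤ) :
    {y | ∃ a ∈ AddSubmonoid.closure s, a ≠ 0 ∧ y = x + ntz a} =
      {y | y - x ∈ AddSubmonoid.closure (ntz '' s) ∧ y ≠ x} := by
  ext y
  have h : (∃ a ∈ AddSubmonoid.closure s, y = x + ntz a) ↔
      y - x ∈ AddSubmonoid.closure (ntz '' s) := Set.ext_iff.mp (setOf_eq_add_ntz s x) y
  change _ ↔ _ ∧ _
  rw [← h]
  constructor
  · rintro ⟨a, ha, ha0, rfl⟩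
    exact ⟨⟨a, ha, rfl⟩, by simpa [ntz_eq_zero_iff] using ha0⟩
  · rintro ⟨⟨a, ha, rfl⟩, hne⟩
    exact ⟨a, ha, by simpa [ntz_eq_zero_iff] using hne, rfl⟩

theorem linearIndependent_int_ntz {d : ℕ} {e : Fin d → Fin m → ℕ}
    (hli : LinearIndependent ℚ (fun k => ntq (e k))) :
    LinearIndependent ℤ (ntz ∘ e) :=
  (hli.restrict_scalars' ℤ).of_comp ((Int.castAddHom ℚ).toIntLinearMap.compLeft (Fin m))

end Cast

section CosetSlice

variable {m d : ℕ} (B : AddSubmonoid (Fin m → ℕ)) {e : Fin d → Fin m → ℕ}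

def cosetSlice (G : AddSubgroup (Fin m → ℤ)) (x : Fin m → ℤ) : Set (Fin m → ℤ) :=
  {y | ∃ b ∈ B, ntz b = y ∧ y - x ∈ G}

theorem ntz_mem_cosetSlice_self (G : AddSubgroup (Fin m → ℤ)) {b : Fin m → ℕ} (hb : b ∈ B) :
    ntz b ∈ cosetSlice B G (ntz b) :=
  ⟨b, hb, rfl, by simp⟩

local notation "P" => AddSubmonoid.closure (Set.range (ntz ∘ e))
local notation "G" => AddSubgroup.closure (Set.range (ntz ∘ e))

theorem exists_ntz_eq_add_of_cosetSlice_eq (hv : LinearIndependent ℤ (ntz ∘ e))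
    {h : Fin m → ℤ} (hh : cosetSlice B G h = {y | y - h ∈ P ∧ y ≠ h}) (k : Fin d) :
    ∃ c ∈ B, ntz c = h + ntz (e k) := by
  have hk : h + ntz (e k) ∈ {y | y - h ∈ P ∧ y ≠ h} :=
    ⟨by rw [add_sub_cancel_left]; exact AddSubmonoid.subset_closure (Set.mem_range_self k),
      by simpa using hv.ne_zero k⟩
  obtain ⟨c, hc, hce, -⟩ := hh ▸ hk
  exact ⟨c, hc, hce⟩

theorem add_mem_cosetSlice_or_eq (hv : LinearIndependent ℤ (ntz ∘ e))
    {h : Fin m → ℤ} (hh : cosetSlice B G h = {y | y - h ∈ P ∧ y ≠ h})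
    {b : Fin m → ℕ} (hb : b ∈ B)
    {x : Fin m → ℤ} (hx : cosetSlice B G (h + ntz b) = {y | y - x ∈ P} ∨
      cosetSlice B G (h + ntz b) = {y | y - x ∈ P ∧ y ≠ x}) :
    h + ntz b ∈ cosetSlice B G (h + ntz b) ∨
      cosetSlice B G (h + ntz b) = {y | y - (h + ntz b) ∈ P ∧ y ≠ h + ntz b} := by
  refine mem_or_eq_pos_translate hv (fun _ ⟨_, _, _, hy⟩ => hy) (fun k => ?_) hx
  obtain ⟨c, hc, hce⟩ := exists_ntz_eq_add_of_cosetSlice_eq B hv hh k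
  refine ⟨c + b, B.add_mem hc hb, ?_, ?_⟩
  · rw [ntz_add, hce, Function.comp_apply]
    abel
  · rw [add_sub_cancel_left]
    exact AddSubgroup.subset_closure (Set.mem_range_self k)

end CosetSlice

theorem stmt13_general {m d : ℕ} (B : AddSubmonoid (Fin m → ℕ))
    (e : Fin d → Fin m → ℕ)
    (hli : LinearIndependent ℚ (fun k => ntq (e k)))
    (A : AddSubmonoid (Fin m → ℕ)) (hA : A = AddSubmonoid.closure (Set.range e))
    (hdec : ∀ x ∈ grp B, ∃ hg ∈ grp B,
      {y : Fin m → ℤ | ∃ b ∈ B, ntz b = y ∧ y - x ∈ grp A} =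
          {y : Fin m → ℤ | ∃ a ∈ A, y = hg + ntz a} ∨
      {y : Fin m → ℤ | ∃ b ∈ B, ntz b = y ∧ y - x ∈ grp A} =
          {y : Fin m → ℤ | ∃ a ∈ A, a ≠ 0 ∧ y = hg + ntz a})
    (H : Set (Fin m → ℤ))
    (hH : H = {h : Fin m → ℤ | h ∈ grp B ∧
      {y : Fin m → ℤ | ∃ b ∈ B, ntz b = y ∧ y - h ∈ grp A} =
        {y : Fin m → ℤ | ∃ a ∈ A, a ≠ 0 ∧ y = h + ntz a}})
    (C : Set (Fin m → ℕ)) (hC : C = Hilb B \ Set.range e) :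
    {y : Fin m → ℤ | ∃ h ∈ H, ∃ c ∈ C, y = h + ntz c} ∩ H = ∅ ↔
      ∀ h ∈ H, ∀ b ∈ Hilb B, ∃ c ∈ B, ntz c = h + ntz b := by
  subst hA hH hC
  have hv := linearIndependent_int_ntz hli
  simp only [setOf_eq_add_ntz, setOf_ne_zero_eq_add_ntz, grp_closure, ← Set.range_comp] at hdec ⊢
  constructor
  · intro hdisj h hh b hb
    by_cases hbe : b ∈ Set.range e
    · obtain ⟨k, rfl⟩ := hbe
      exact exists_ntz_eq_add_of_cosetSlice_eq B hv hh.2 k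
    have hg : h + ntz b ∈ grp B := add_mem hh.1 (AddSubgroup.subset_closure ⟨b, hb.1, rfl⟩)
    obtain ⟨x, -, hx⟩ := hdec _ hg
    rcases add_mem_cosetSlice_or_eq B hv hh.2 hb.1 hx with ⟨c, hc, hcg, -⟩ | hgH
    · exact ⟨c, hc, hcg⟩
    · exact (Set.eq_empty_iff_forall_notMem.mp hdisj _ ⟨⟨h, hh, b, ⟨hb, hbe⟩, rfl⟩, hg, hgH⟩).elim
  · intro hall
    refine Set.eq_empty_of_forall_notMem ?_
    rintro _ ⟨⟨h, hh, c, hc, rfl⟩, -, hH⟩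
    obtain ⟨c', hc', hc'e⟩ := hall h hh c hc.1
    exact ((Set.ext_iff.mp hH _).mp (hc'e ▸ ntz_mem_cosetSlice_self B _ hc')).2 rfl

/-- Let `B ⊆ ℕ^m` be a positive affine semigroup such that `C(B)` is
generated by linearly independent `e₁,…,e_d ∈ B`, and let `A` be the submonoid of `B`
generated by the `e_k`.  Assume that for every coset `g` of `G(A)` in `G(B)` there is
`h_g ∈ G(B)` with `B ∩ g = h_g + A` or `B ∩ g = h_g + (A \ {0})`.  Let
`H := {h ∈ G(B) : B ∩ (h + G(A)) = h + (A \ {0})}` and `C := Hilb(B) \ {e₁,…,e_d}`.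
Then `(H + C) ∩ H = ∅` iff `h + b ∈ B` for all `h ∈ H` and all `b ∈ Hilb(B)`. -/
theorem stmt13 {m d : ℕ} (B : AddSubmonoid (Fin m → ℕ)) (hBfg : B.FG)
    (e : Fin d → Fin m → ℕ) (he : ∀ k, e k ∈ B)
    (hli : LinearIndependent ℚ (fun k => ntq (e k)))
    (A : AddSubmonoid (Fin m → ℕ)) (hA : A = AddSubmonoid.closure (Set.range e))
    (hcone : cone B = cone A)
    (hdec : ∀ x ∈ grp B, ∃ hg ∈ grp B,
      {y : Fin m → ℤ | ∃ b ∈ B, ntz b = y ∧ y - x ∈ grp A} =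
          {y : Fin m → ℤ | ∃ a ∈ A, y = hg + ntz a} ∨
      {y : Fin m → ℤ | ∃ b ∈ B, ntz b = y ∧ y - x ∈ grp A} =
          {y : Fin m → ℤ | ∃ a ∈ A, a ≠ 0 ∧ y = hg + ntz a})
    (H : Set (Fin m → ℤ))
    (hH : H = {h : Fin m → ℤ | h ∈ grp B ∧
      {y : Fin m → ℤ | ∃ b ∈ B, ntz b = y ∧ y - h ∈ grp A} =
        {y : Fin m → ℤ | ∃ a ∈ A, a ≠ 0 ∧ y = h + ntz a}})
    (C : Set (Fin m → ℕ)) (hC : C = Hilb B \ Set.range e) :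
    {y : Fin m → ℤ | ∃ h ∈ H, ∃ c ∈ C, y = h + ntz c} ∩ H = ∅ ↔
      ∀ h ∈ H, ∀ b ∈ Hilb B, ∃ c ∈ B, ntz c = h + ntz b :=
  stmt13_general B e hli A hA hdec H hH C hC
end

section
/- Let B ⊆ ℕ^m be a positive affine semigroup such that C(B) is generated by linearly independent elements e_1,…,e_d ∈ B, and let A be the submonoid of B generated by e_1,…,e_d. For x ∈ C(B) write x = Σ_{i=1}^d λ_i(x) e_i with λ_i(x) ∈ ℚ≥0. Then B is seminormal, i.e., every x ∈ G(B) with 2x ∈ B and 3x ∈ B satisfies x ∈ B, if and only if every x ∈ B_A satisfies λ_i(x) ≤ 1 for all i = 1,…,d. -/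
open scoped BigOperators

/-!
Every `v ∈ B` splits as `x + a` with `x ∈ B_A` and `a ∈ A`, so `λ(v) - λ(x)` is a vector of
natural numbers. If `λ ≤ 1` on `B_A`, then `Σ k_i e_i` can be subtracted from `v` inside `B`
whenever every nonzero `k_i` is below `λ_i(v)`. Given `2y, 3y ∈ B`, every `ny` with `n ≥ 2`
lies in `B`; for `N` with `Nλ(y)` integral, stripping `Ny = Σ Nλ_i(y) e_i` off `(N+1)y`
leaves `y ∈ B`.

Conversely, if `x ∈ B_A` has `λ_i(x) > 1`, then `z = x - e_i` satisfies `Nz, (N+1)z ∈ B` for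
such an `N`, hence `nz ∈ B` for all `n ≥ N²`. Seminormality, applied to `nz` (as
`2nz, 3nz ∈ B`), descends this to `z ∈ B`, so `x ∈ B + e_i`, contradicting `x ∈ B_A`.
-/

open Finset

section Casts

variable (R : Type*) [AddMonoidWithOne R] (m : ℕ)

def natCastHom : (Fin m → ℕ) →+ (Fin m → R) :=
  (Nat.castAddMonoidHom R).compLeft (Fin m)

variable {R m}

@[simp]
lemma natCastHom_apply (x : Fin m → ℕ) (j : Fin m) : natCastHom R m x j = x j := rfl

lemma coe_natCastHom_rat : ⇑(natCastHom ℚ m) = ntq := rfl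

lemma natCastHom_injective [CharZero R] : Function.Injective (natCastHom R m) :=
  Nat.cast_injective.comp_left

end Casts

lemma ntq_injective {m : ℕ} : Function.Injective (@ntq m) :=
  natCastHom_injective

lemma ntq_add {m : ℕ} (x y : Fin m → ℕ) : ntq (x + y) = ntq x + ntq y :=
  map_add (natCastHom ℚ m) x y

lemma ntq_nsmul {m : ℕ} (n : ℕ) (x : Fin m → ℕ) : ntq (n • x) = (n : ℚ) • ntq x := by
  rw [← coe_natCastHom_rat, map_nsmul, Nat.cast_smul_eq_nsmul]

lemma ntq_sum_nsmul {m d : ℕ} (k : Fin d → ℕ) (v : Fin d → Fin m → ℕ) :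
    ntq (∑ j, k j • v j) = ∑ j, (k j : ℚ) • ntq (v j) := by
  simp only [← coe_natCastHom_rat, map_sum, map_nsmul, Nat.cast_smul_eq_nsmul]

lemma natCastHom_mem_grp {m : ℕ} {B : AddSubmonoid (Fin m → ℕ)} {b : Fin m → ℕ} (hb : b ∈ B) :
    natCastHom ℤ m b ∈ grp B :=
  AddSubgroup.subset_closure ⟨b, hb, rfl⟩

lemma ntq_mem_cone_of_nsmul_mem {m n : ℕ} {B : AddSubmonoid (Fin m → ℕ)} {y : Fin m → ℕ}
    (hn : n ≠ 0) (hy : n • y ∈ B) : ntq y ∈ cone B := by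
  refine ⟨1, fun _ => (n : ℚ)⁻¹, fun _ => n • y, fun _ => by positivity, fun _ => hy, ?_⟩
  rw [Fin.sum_univ_one, ntq_nsmul, smul_smul, inv_mul_cancel₀ (by exact_mod_cast hn), one_smul]

lemma ntq_mem_cone {m : ℕ} {B : AddSubmonoid (Fin m → ℕ)} {b : Fin m → ℕ} (hb : b ∈ B) :
    ntq b ∈ cone B :=
  ntq_mem_cone_of_nsmul_mem one_ne_zero (by rwa [one_nsmul])

lemma exists_natCastHom_eq_of_nsmul_mem_range {m n : ℕ} (hn : 0 < n) {z : Fin m → ℤ}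
    (hz : n • z ∈ Set.range (natCastHom ℤ m)) : ∃ y, natCastHom ℤ m y = z := by
  obtain ⟨b, hb⟩ := hz
  refine ⟨fun j => (z j).toNat, funext fun j => Int.toNat_of_nonneg ?_⟩
  have hbj : (b j : ℤ) = n * z j := by simpa using congrFun hb j
  exact nonneg_of_mul_nonneg_right (hbj ▸ Int.natCast_nonneg _) (by exact_mod_cast hn)

lemma exists_natCast_eq_nat_mul {d : ℕ} (μ : Fin d → ℚ) (hμ : ∀ j, 0 ≤ μ j) :
    ∃ N : ℕ, 0 < N ∧ ∃ c : Fin d → ℕ, ∀ j, (c j : ℚ) = N * μ j := by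
  set N := ∏ j, (μ j).den
  refine ⟨N, prod_pos fun j _ => (μ j).den_pos, fun j => N / (μ j).den * (μ j).num.toNat,
    fun j => ?_⟩
  have hdvd : (μ j).den ∣ N := dvd_prod_of_mem _ (mem_univ j)
  have hnum : ((μ j).num.toNat : ℚ) = (μ j).num := by
    exact_mod_cast Int.toNat_of_nonneg (Rat.num_nonneg.2 (hμ j))
  rw [Nat.cast_mul, Nat.cast_div hdvd (by simp), hnum, ← Rat.mul_den_eq_num]
  field_simp

lemma exists_nsmul_eq_sum_nsmul {m d : ℕ} {e : Fin d → Fin m → ℕ} {x : Fin m → ℕ}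
    {μ : Fin d → ℚ} (hμ : ∀ j, 0 ≤ μ j) (hx : ntq x = ∑ j, μ j • ntq (e j)) :
    ∃ N : ℕ, 0 < N ∧ ∃ c : Fin d → ℕ, (∀ j, (c j : ℚ) = N * μ j) ∧ N • x = ∑ j, c j • e j := by
  obtain ⟨N, hN, c, hc⟩ := exists_natCast_eq_nat_mul μ hμ
  refine ⟨N, hN, c, hc, ntq_injective ?_⟩
  simp only [ntq_nsmul, ntq_sum_nsmul, hx, smul_sum, hc, mul_smul]

lemma sum_nsmul_eq_sum_tsub_add {ι M : Type*} [Fintype ι] [AddCommMonoid M] {k k' : ι → ℕ}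
    (h : k ≤ k') (v : ι → M) :
    ∑ j, k' j • v j = ∑ j, (k' j - k j) • v j + ∑ j, k j • v j := by
  rw [← sum_add_distrib]
  exact sum_congr rfl fun j _ => by rw [← add_smul, Nat.sub_add_cancel (h j)]

lemma exists_mem_BA_add {m : ℕ} (A : AddSubmonoid (Fin m → ℕ)) {B : AddSubmonoid (Fin m → ℕ)}
    {v : Fin m → ℕ} (hv : v ∈ B) : ∃ x ∈ BA A B, ∃ a ∈ A, v = x + a := by
  induction v using WellFoundedLT.induction with
  | _ v ih =>
    by_cases hvBA : v ∈ BA A B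
    · exact ⟨v, hvBA, 0, A.zero_mem, (add_zero v).symm⟩
    obtain ⟨b, hb, a, ha, ha0, rfl⟩ : ∃ b ∈ B, ∃ a ∈ A, a ≠ 0 ∧ v = b + a := by
      simpa [BA, hv] using hvBA
    obtain ⟨x, hx, a', ha', rfl⟩ := ih b (lt_add_of_pos_right b (pos_iff_ne_zero.2 ha0)) hb
    exact ⟨x, hx, a' + a, A.add_mem ha' ha, add_assoc x a' a⟩

lemma AddSubmonoid.nsmul_mem_of_mul_self_le {M : Type*} [AddMonoid M] {S : AddSubmonoid M}
    {z : M} {N n : ℕ} (hN : N • z ∈ S) (hN1 : (N + 1) • z ∈ S) (hn : N * N ≤ n) :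
    n • z ∈ S := by
  rcases N.eq_zero_or_pos with rfl | hNpos
  · exact S.nsmul_mem (by simpa using hN1) n
  have hrq : n % N ≤ n / N :=
    (Nat.mod_lt n hNpos).le.trans ((Nat.le_div_iff_mul_le hNpos).2 hn)
  obtain ⟨s, hs⟩ := Nat.exists_eq_add_of_le hrq
  have hsplit : n = s * N + n % N * (N + 1) := by
    have := Nat.div_add_mod n N
    rw [hs] at this
    linarith
  rw [hsplit, add_nsmul, mul_nsmul', mul_nsmul']
  exact S.add_mem (S.nsmul_mem hN s) (S.nsmul_mem hN1 _)

/-- Membership in `B.map (natCastHom ℤ m)` unfolds to `∃ b ∈ B, ntz b = _`, so this is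
definitionally the seminormality condition as written in `stmt15`. -/
def IsSeminormal {m : ℕ} (B : AddSubmonoid (Fin m → ℕ)) : Prop :=
  ∀ z ∈ grp B, 2 • z ∈ B.map (natCastHom ℤ m) → 3 • z ∈ B.map (natCastHom ℤ m) →
    z ∈ B.map (natCastHom ℤ m)

lemma IsSeminormal.mem_of_forall_ge_nsmul_mem {m : ℕ} {B : AddSubmonoid (Fin m → ℕ)}
    (hB : IsSeminormal B) {z : Fin m → ℤ} (hz : z ∈ grp B) {n₀ : ℕ}
    (h : ∀ n ≥ n₀, n • z ∈ B.map (natCastHom ℤ m)) : z ∈ B.map (natCastHom ℤ m) := by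
  suffices key : ∀ j n, n₀ ≤ n + j → 0 < n → n • z ∈ B.map (natCastHom ℤ m) by
    simpa using key n₀ 1 (by omega) one_pos
  intro j
  induction j with
  | zero => exact fun n hn _ => h n hn
  | succ j ih =>
    intro n hn hpos
    apply hB _ (AddSubgroup.nsmul_mem _ hz n) <;> rw [← mul_nsmul'] <;>
      exact ih _ (by omega) (by omega)

section Coordinates

variable {m d : ℕ} {B : AddSubmonoid (Fin m → ℕ)} {e : Fin d → Fin m → ℕ}
  {lam : (Fin m → ℕ) → Fin d → ℚ}

lemma exists_eq_add_sum_nsmul_of_lam_le_one (he : ∀ k, e k ∈ B)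
    (hli : LinearIndependent ℚ (fun k => ntq (e k)))
    (hlam : ∀ x ∈ B, ntq x = ∑ i, lam x i • ntq (e i))
    (hbound : ∀ x ∈ BA (AddSubmonoid.closure (Set.range e)) B, ∀ i, lam x i ≤ 1)
    {v : Fin m → ℕ} (hv : v ∈ B) {k : Fin d → ℕ} (hk : ∀ j, 0 < k j → (k j : ℚ) < lam v j) :
    ∃ b ∈ B, v = b + ∑ j, k j • e j := by
  obtain ⟨x, hx, a, ha, rfl⟩ := exists_mem_BA_add _ hv
  obtain ⟨k', rfl⟩ := (AddSubmonoid.mem_closure_range_iff_of_fintype (f := e)).1 ha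
  have hlv : ∀ j, lam (x + ∑ j, k' j • e j) j = lam x j + k' j :=
    Fintype.linearIndependent_iffₛ.1 hli _ _ <| by
      rw [← hlam _ hv, ntq_add, ntq_sum_nsmul, hlam x hx.1]
      simp only [add_smul, sum_add_distrib]
  have hkk' : k ≤ k' := fun j => by
    rcases (k j).eq_zero_or_pos with h0 | hpos
    · exact h0 ▸ (k' j).zero_le
    have hlt := hlv j ▸ hk j hpos
    have : (k j : ℚ) < k' j + 1 := by linarith [hbound x hx j]
    exact Nat.lt_succ_iff.1 (by exact_mod_cast this)
  refine ⟨x + ∑ j, (k' j - k j) • e j,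
    B.add_mem hx.1 (sum_mem fun j _ => B.nsmul_mem (he j) _), ?_⟩
  rw [sum_nsmul_eq_sum_tsub_add hkk', add_assoc]

lemma IsSeminormal.lam_le_one (hB : IsSeminormal B) (he : ∀ k, e k ∈ B)
    (hli : LinearIndependent ℚ (fun k => ntq (e k)))
    (hlam : ∀ x : Fin m → ℕ, ntq x ∈ cone B →
      (∀ i, 0 ≤ lam x i) ∧ ntq x = ∑ i, lam x i • ntq (e i))
    {x : Fin m → ℕ} (hx : x ∈ BA (AddSubmonoid.closure (Set.range e)) B) (i : Fin d) :
    lam x i ≤ 1 := by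
  classical
  by_contra! hgt
  obtain ⟨hμ, hxμ⟩ := hlam x (ntq_mem_cone hx.1)
  obtain ⟨N, hN, c, hc, hNx⟩ := exists_nsmul_eq_sum_nsmul hμ hxμ
  have hci : (Pi.single i (N + 1) : Fin d → ℕ) ≤ c := by
    have : (N : ℚ) < c i := by rw [hc i]; nlinarith [(Nat.cast_pos (α := ℚ)).2 hN]
    intro j
    rcases eq_or_ne j i with rfl | hj
    · simpa using (show N < c j by exact_mod_cast this)
    · simp [hj]
  set a := ∑ j, (c j - (Pi.single i (N + 1) : Fin d → ℕ) j) • e j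
  have ha : a ∈ B := sum_mem fun j _ => B.nsmul_mem (he j) _
  have hNx' : N • x = a + (N + 1) • e i := by
    rw [hNx, sum_nsmul_eq_sum_tsub_add hci]
    congr 1
    simp [Pi.single_apply, ite_smul]
  set f := natCastHom ℤ m
  have hf : N • f x = f a + (N + 1) • f (e i) := by
    simpa only [map_add, map_nsmul] using congrArg f hNx'
  have hz : f x - f (e i) ∈ grp B := sub_mem (natCastHom_mem_grp hx.1) (natCastHom_mem_grp (he i))
  have hzN : N • (f x - f (e i)) ∈ B.map f :=
    ⟨a + e i, B.add_mem ha (he i), by rw [map_add, smul_sub, hf, succ_nsmul]; abel⟩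
  have hzN1 : (N + 1) • (f x - f (e i)) ∈ B.map f :=
    ⟨a + x, B.add_mem ha hx.1, by rw [map_add, succ_nsmul, smul_sub, hf, succ_nsmul]; abel⟩
  obtain ⟨b, hb, hbz⟩ := hB.mem_of_forall_ge_nsmul_mem hz fun n hn =>
    AddSubmonoid.nsmul_mem_of_mul_self_le hzN hzN1 hn
  refine hx.2 ⟨b, hb, e i, AddSubmonoid.subset_closure ⟨i, rfl⟩, fun h0 => ?_, ?_⟩
  · exact hli.ne_zero i (by rw [h0]; exact map_zero (natCastHom ℚ m))
  · exact natCastHom_injective (R := ℤ) (by rw [map_add, hbz, sub_add_cancel])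

lemma isSeminormal_of_lam_le_one (he : ∀ k, e k ∈ B)
    (hli : LinearIndependent ℚ (fun k => ntq (e k)))
    (hlam : ∀ x : Fin m → ℕ, ntq x ∈ cone B →
      (∀ i, 0 ≤ lam x i) ∧ ntq x = ∑ i, lam x i • ntq (e i))
    (hbound : ∀ x ∈ BA (AddSubmonoid.closure (Set.range e)) B, ∀ i, lam x i ≤ 1) :
    IsSeminormal B := by
  intro z _ h2 h3
  obtain ⟨y, rfl⟩ := exists_natCastHom_eq_of_nsmul_mem_range two_pos (Set.image_subset_range _ _ h2)
  rw [← map_nsmul, AddSubmonoid.mem_map_iff_mem natCastHom_injective] at h2 h3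
  have hy : ∀ n, 2 ≤ n → n • y ∈ B := by
    intro n hn
    obtain rfl | rfl | hn4 : n = 2 ∨ n = 3 ∨ 2 * 2 ≤ n := by omega
    exacts [h2, h3, AddSubmonoid.nsmul_mem_of_mul_self_le h2 h3 hn4]
  obtain ⟨hμ, hyμ⟩ := hlam y (ntq_mem_cone_of_nsmul_mem two_ne_zero h2)
  obtain ⟨N, hN, c, hc, hNy⟩ := exists_nsmul_eq_sum_nsmul hμ hyμ
  have hv : (N + 1) • y ∈ B := hy _ (by omega)
  have hlv : ∀ j, lam ((N + 1) • y) j = ((N + 1 : ℕ) : ℚ) * lam y j :=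
    Fintype.linearIndependent_iffₛ.1 hli _ _ <| by
      simp only [← (hlam _ (ntq_mem_cone hv)).2, ntq_nsmul, hyμ, smul_sum, mul_smul]
  obtain ⟨b, hb, hbv⟩ := exists_eq_add_sum_nsmul_of_lam_le_one he hli
    (fun x hx => (hlam x (ntq_mem_cone hx)).2) hbound hv
    (k := c) fun j hj => by
      have hpos : 0 < lam y j := by
        have : (0 : ℚ) < c j := by exact_mod_cast hj
        rw [hc j] at this
        exact pos_of_mul_pos_right this (Nat.cast_nonneg N)
      rw [hlv j, hc j]
      push_cast
      linarith
  rw [← hNy, succ_nsmul'] at hbv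
  exact ⟨y, add_right_cancel hbv ▸ hb, rfl⟩

end Coordinates

theorem stmt15_general {m d : ℕ} (B : AddSubmonoid (Fin m → ℕ))
    (e : Fin d → Fin m → ℕ) (he : ∀ k, e k ∈ B)
    (hli : LinearIndependent ℚ (fun k => ntq (e k)))
    (A : AddSubmonoid (Fin m → ℕ)) (hA : A = AddSubmonoid.closure (Set.range e))
    (lam : (Fin m → ℕ) → Fin d → ℚ)
    (hlam : ∀ x : Fin m → ℕ, ntq x ∈ cone B →
      (∀ i, 0 ≤ lam x i) ∧ ntq x = ∑ i, lam x i • ntq (e i)) :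
    (∀ z : Fin m → ℤ, z ∈ grp B → (∃ b ∈ B, ntz b = 2 • z) → (∃ b ∈ B, ntz b = 3 • z) →
        ∃ b ∈ B, ntz b = z) ↔
      ∀ x ∈ BA A B, ∀ i, lam x i ≤ 1 := by
  subst hA
  exact ⟨fun hB _ hx i => IsSeminormal.lam_le_one hB he hli hlam hx i,
    isSeminormal_of_lam_le_one he hli hlam⟩

/-- Let `B ⊆ ℕ^m` be a positive affine semigroup such that `C(B)` is
generated by linearly independent `e₁,…,e_d ∈ B`, and let `A` be the submonoid of `B`
generated by the `e_k`.  For `x ∈ C(B)` write `x = Σ_i λ_i(x) e_i` with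
`λ_i(x) ∈ ℚ≥0`.  Then `B` is seminormal, i.e. every `x ∈ G(B)` with `2x ∈ B` and
`3x ∈ B` satisfies `x ∈ B`, if and only if every `x ∈ B_A` satisfies `λ_i(x) ≤ 1`
for all `i`. -/
theorem stmt15 {m d : ℕ} (B : AddSubmonoid (Fin m → ℕ)) (hBfg : B.FG)
    (e : Fin d → Fin m → ℕ) (he : ∀ k, e k ∈ B)
    (hli : LinearIndependent ℚ (fun k => ntq (e k)))
    (A : AddSubmonoid (Fin m → ℕ)) (hA : A = AddSubmonoid.closure (Set.range e))
    (hcone : cone B = cone A)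
    (lam : (Fin m → ℕ) → Fin d → ℚ)
    (hlam : ∀ x : Fin m → ℕ, ntq x ∈ cone B →
      (∀ i, 0 ≤ lam x i) ∧ ntq x = ∑ i, lam x i • ntq (e i)) :
    (∀ z : Fin m → ℤ, z ∈ grp B → (∃ b ∈ B, ntz b = 2 • z) → (∃ b ∈ B, ntz b = 3 • z) →
        ∃ b ∈ B, ntz b = z) ↔
      ∀ x ∈ BA A B, ∀ i, lam x i ≤ 1 :=
  stmt15_general B e he hli A hA lam hlam
end
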